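/- For n ≥ 3 and a natural number k ≥ 1, ∫_{∂B(0,1)} x_1^{2k} e^{−i x·ξ} dσ(x) = (2π)^{n/2} (2k−1)!! Ψ_{n/2+k−1}(ξ) + o(|ξ|) as ξ → 0, where Ψ_ν(ξ) = J_ν(|ξ|)/|ξ|^ν. In particular, the limit as ξ → 0 equals (2π)^{n/2}(2k−1)!! · 2^{−(n/2+k−1)}/Γ(n/2+k). -/

import Mathlib

open MeasureTheory Real RealInnerProductSpace Asymptotics Filter

/-- Bessel function of the first kind of order `ν`, by its power series. -/
noncomputable def besselJ (ν t : ℝ) : ℝ :=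
  (t / 2) ^ ν * ∑' k : ℕ, (-1) ^ k / (k.factorial * Real.Gamma (ν + k + 1)) * (t / 2) ^ (2 * k)

open Classical in
/-- `Ψ_ν(ξ) = J_ν(|ξ|)/|ξ|^ν`, extended continuously at `ξ = 0` by `2^{−ν}/Γ(ν+1)`. -/
noncomputable def PsiE (ν : ℝ) {n : ℕ} (ξ : EuclideanSpace ℝ (Fin n)) : ℝ :=
  if ξ = 0 then (2 : ℝ) ^ (-ν) / Real.Gamma (ν + 1) else besselJ ν ‖ξ‖ / ‖ξ‖ ^ ν

/-! Both sides are `∫ x₁^{2k} dσ + O(|ξ|²)`. On the Fourier side,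
`e^{-i x·ξ} = 1 - i x·ξ + O(|ξ|²)` and the linear term integrates to zero because `x₁^{2k} (x·ξ)`
is odd. On the Bessel side, `Ψ_ν(ξ) = 2^{-ν} Σ_m (-1)^m (|ξ|/2)^{2m} / (m! Γ(ν+m+1))` is
`2^{-ν}/Γ(ν+1) + O(|ξ|²)`. The constants agree because integrating the homogeneous polynomial
`x₁^{2k}` against `e^{-|x|²/2}` gives `(∫ x₁^{2k} dσ) · 2^{n/2+k-1} Γ(n/2+k)` in polar
coordinates and `(2π)^{n/2} (2k-1)!!` by Fubini. -/

open Set Metric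
open scoped Nat Topology

theorem integral_Ioi_pow_mul_exp_neg_sq_div_two (m : ℕ) :
    ∫ r in Ioi (0 : ℝ), r ^ m * exp (-(r ^ 2 / 2)) =
      2 ^ (((m : ℝ) + 1) / 2 - 1) * Gamma (((m : ℝ) + 1) / 2) := by
  have h := integral_rpow_mul_exp_neg_mul_rpow (p := 2) (q := m) (b := 1 / 2) two_pos
    (neg_one_lt_zero.trans_le m.cast_nonneg) one_half_pos
  have h_const :
      (1 / 2 : ℝ) ^ (-((m : ℝ) + 1) / 2) * (1 / 2) = 2 ^ (((m : ℝ) + 1) / 2 - 1) := by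
    rw [rpow_sub two_pos, rpow_one, one_div, inv_rpow zero_le_two, ← rpow_neg zero_le_two,
      neg_div, neg_neg]
    ring
  rw [h_const] at h
  rw [← h]
  refine setIntegral_congr_fun measurableSet_Ioi fun r _ => ?_
  norm_cast
  ring_nf

theorem integral_pow_two_mul_mul_exp_neg_sq_div_two (k : ℕ) :
    ∫ t : ℝ, t ^ (2 * k) * exp (-(t ^ 2 / 2)) = √(2 * π) * (2 * k - 1)‼ := by
  have h_even : ∫ t : ℝ, t ^ (2 * k) * exp (-(t ^ 2 / 2)) =
      2 * ∫ t in Ioi (0 : ℝ), t ^ (2 * k) * exp (-(t ^ 2 / 2)) := by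
    rw [← integral_comp_abs (f := fun t => t ^ (2 * k) * exp (-(t ^ 2 / 2)))]
    simp only [(even_two_mul k).pow_abs, sq_abs]
  rw [h_even, integral_Ioi_pow_mul_exp_neg_sq_div_two,
    show ((2 * k : ℕ) + 1 : ℝ) / 2 = k + 1 / 2 by push_cast; ring, Gamma_nat_add_half,
    show (k : ℝ) + 1 / 2 - 1 = k - 1 / 2 by ring, rpow_sub two_pos, rpow_natCast,
    sqrt_mul zero_le_two, ← sqrt_eq_rpow]
  have : (0 : ℝ) < √2 := by positivity
  field_simp
  rw [sq_sqrt zero_le_two]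

section Polar

variable {E : Type*} [NormedAddCommGroup E] [NormedSpace ℝ E] [FiniteDimensional ℝ E]
  [MeasurableSpace E] [BorelSpace E] [Nontrivial E] (μ : Measure E) [μ.IsAddHaarMeasure]

theorem integral_eq_integral_toSphere_mul_integral_Ioi (f : E → ℝ) (F : sphere (0 : E) 1 → ℝ)
    (G : ℝ → ℝ) (hfFG : ∀ y : sphere (0 : E) 1, ∀ r : ℝ, 0 < r → f (r • (y : E)) = F y * G r) :
    ∫ x, f x ∂μ =
      (∫ y, F y ∂μ.toSphere) * ∫ r in Ioi (0 : ℝ), r ^ (Module.finrank ℝ E - 1) * G r := by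
  set Φ := homeomorphUnitSphereProd E
  have h_polar (x : ({0}ᶜ : Set E)) : f x = F (Φ x).1 * G (Φ x).2 := by
    rw [← hfFG _ _ (Φ x).2.2]
    exact congrArg (f ∘ Subtype.val) (Φ.symm_apply_apply x).symm
  calc ∫ x, f x ∂μ = ∫ x : ({0}ᶜ : Set E), f x ∂μ.comap (↑) := by
        rw [integral_subtype_comap (measurableSet_singleton _).compl, restrict_compl_singleton]
    _ = ∫ p, F p.1 * G p.2 ∂μ.toSphere.prod (.volumeIoiPow (Module.finrank ℝ E - 1)) := by
        rw [← (μ.measurePreserving_homeomorphUnitSphereProd).integral_comp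
          Φ.measurableEmbedding]
        simp_rw [h_polar]
        rfl
    _ = _ := by
        rw [integral_prod_mul F (fun r : Ioi (0 : ℝ) => G r), Measure.volumeIoiPow,
          integral_withDensity_eq_integral_toReal_smul (by fun_prop)
          (ae_of_all _ fun _ => ENNReal.ofReal_lt_top),
          ← integral_subtype_comap measurableSet_Ioi]
        congr 1
        refine integral_congr_ae (ae_of_all _ fun r => ?_)
        simp only [ENNReal.toReal_ofReal (pow_nonneg r.2.out.le _), smul_eq_mul]

theorem integral_mul_exp_neg_norm_sq_div_two_of_homogeneous (f : E → ℝ) (m : ℕ)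
    (hf : ∀ r : ℝ, 0 < r → ∀ x, f (r • x) = r ^ m * f x) :
    ∫ x, f x * exp (-(‖x‖ ^ 2 / 2)) ∂μ = (∫ y, f y ∂μ.toSphere) *
      (2 ^ ((Module.finrank ℝ E + m : ℝ) / 2 - 1) *
        Gamma ((Module.finrank ℝ E + m : ℝ) / 2)) := by
  have hd : 0 < Module.finrank ℝ E := Module.finrank_pos
  rw [integral_eq_integral_toSphere_mul_integral_Ioi μ _ (fun y => f y)
    (fun r => r ^ m * exp (-(r ^ 2 / 2))) fun y r hr => by
      rw [hf r hr, norm_smul, norm_of_nonneg hr.le, norm_eq_of_mem_sphere y, mul_one]; ring]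
  congr 1
  simp_rw [← mul_assoc, ← pow_add]
  have h_exp : ((Module.finrank ℝ E - 1 + m : ℕ) : ℝ) + 1 = Module.finrank ℝ E + m := by
    push_cast [Nat.cast_sub hd]; ring
  rw [integral_Ioi_pow_mul_exp_neg_sq_div_two, h_exp]

theorem integral_toSphere_eq_zero_of_odd_of_homogeneous (f : E → ℝ) (m : ℕ)
    (hf : ∀ r : ℝ, 0 < r → ∀ x, f (r • x) = r ^ m * f x) (hodd : ∀ x, f (-x) = -f x) :
    ∫ y, f y ∂μ.toSphere = 0 := by
  have h_zero : ∫ x, f x * exp (-(‖x‖ ^ 2 / 2)) ∂μ = 0 := by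
    refine CharZero.eq_neg_self_iff.mp ?_
    rw [← integral_neg, ← integral_neg_eq_self]
    simp only [hodd, norm_neg, neg_mul]
  have hd : 0 < Module.finrank ℝ E := Module.finrank_pos
  have h_radial : 0 < 2 ^ ((Module.finrank ℝ E + m : ℝ) / 2 - 1) *
      Gamma ((Module.finrank ℝ E + m : ℝ) / 2) :=
    mul_pos (rpow_pos_of_pos two_pos _) (Gamma_pos_of_pos (by positivity))
  rw [integral_mul_exp_neg_norm_sq_div_two_of_homogeneous μ f m hf] at h_zero
  exact (mul_eq_zero.mp h_zero).resolve_right h_radial.ne'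

end Polar

theorem norm_integral_mul_cexp_neg_I_sub_integral_le {X : Type*} [MeasurableSpace X]
    {μ : Measure X} [IsFiniteMeasure μ] {a t : X → ℝ} (ha : AEStronglyMeasurable a μ)
    (ht : AEStronglyMeasurable t μ) {A r : ℝ} (haA : ∀ x, |a x| ≤ A) (htr : ∀ x, |t x| ≤ r)
    (hr : r ≤ 1) (h_first_moment : ∫ x, a x * t x ∂μ = 0) :
    ‖∫ x, (a x : ℂ) * Complex.exp (-Complex.I * t x) ∂μ - ∫ x, a x ∂μ‖ ≤
      A * r ^ 2 * μ.real univ := by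
  set e : X → ℂ := fun x => Complex.exp (-Complex.I * t x) - 1 - -Complex.I * t x
  have he (x : X) : ‖e x‖ ≤ r ^ 2 := by
    have h_arg : ‖-Complex.I * t x‖ = |t x| := by simp
    calc ‖e x‖ ≤ ‖-Complex.I * t x‖ ^ 2 :=
          Complex.norm_exp_sub_one_sub_id_le (h_arg.trans_le ((htr x).trans hr))
      _ ≤ r ^ 2 := by rw [h_arg]; exact pow_le_pow_left₀ (abs_nonneg _) (htr x) 2
  have ha_int : Integrable a μ :=
    .of_bound ha A (ae_of_all _ fun x => (Real.norm_eq_abs _).trans_le (haA x))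
  have hat_int : Integrable (fun x => a x * t x) μ :=
    .of_bound (ha.mul ht) (A * r) (ae_of_all _ fun x => by
      rw [Real.norm_eq_abs, abs_mul]
      exact mul_le_mul (haA x) (htr x) (abs_nonneg _) ((abs_nonneg _).trans (haA x)))
  have ha_int' : Integrable (fun x => (a x : ℂ)) μ := ha_int.ofReal
  have hat_int' : Integrable (fun x => ((a x * t x : ℝ) : ℂ)) μ := hat_int.ofReal
  have he_meas : AEStronglyMeasurable e μ := by
    have := Complex.continuous_ofReal.comp_aestronglyMeasurable ht
    fun_prop
  have hae_int : Integrable (fun x => (a x : ℂ) * e x) μ :=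
    .of_bound (ha_int'.aestronglyMeasurable.mul he_meas) (A * r ^ 2) (ae_of_all _ fun x => by
      rw [norm_mul, Complex.norm_real, Real.norm_eq_abs]
      exact mul_le_mul (haA x) (he x) (norm_nonneg _) ((abs_nonneg _).trans (haA x)))
  have h_split : ∫ x, (a x : ℂ) * Complex.exp (-Complex.I * t x) ∂μ =
      ∫ x, (a x : ℂ) * e x ∂μ + ∫ x, (a x : ℂ) ∂μ +
        -Complex.I * ∫ x, ((a x * t x : ℝ) : ℂ) ∂μ := by
    rw [← integral_add hae_int ha_int', ← integral_const_mul,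
      ← integral_add (by exact hae_int.add ha_int') (hat_int'.const_mul _)]
    congr 1 with x
    push_cast
    ring
  rw [h_split, integral_complex_ofReal, integral_complex_ofReal, h_first_moment]
  simp only [Complex.ofReal_zero, mul_zero, add_zero, add_sub_cancel_right]
  refine norm_integral_le_of_norm_le_const (ae_of_all _ fun x => ?_)
  rw [norm_mul, Complex.norm_real, Real.norm_eq_abs]
  exact mul_le_mul (haA x) (he x) (norm_nonneg _) ((abs_nonneg _).trans (haA x))

section EuclideanSphere

variable {n : ℕ}

theorem integral_euclideanSpace_coord_pow_mul_exp_neg_norm_sq_div_two (i : Fin n) (k : ℕ) :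
    ∫ x : EuclideanSpace ℝ (Fin n), x i ^ (2 * k) * exp (-(‖x‖ ^ 2 / 2)) =
      (2 * π) ^ ((n : ℝ) / 2) * (2 * k - 1)‼ := by
  set kj : Fin n → ℕ := Pi.single i k
  have h_prod (x : EuclideanSpace ℝ (Fin n)) : x i ^ (2 * k) * exp (-(‖x‖ ^ 2 / 2)) =
      ∏ j, (x j ^ (2 * kj j) * exp (-(x j ^ 2 / 2))) := by
    rw [Finset.prod_mul_distrib, ← exp_sum, EuclideanSpace.norm_sq_eq]
    simp [kj, Pi.single_apply, Finset.sum_div]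
  have h_fubini :=
    (EuclideanSpace.volume_preserving_symm_measurableEquiv_toLp (Fin n)).symm.integral_comp'
      (fun x : EuclideanSpace ℝ (Fin n) => ∏ j, (x j ^ (2 * kj j) * exp (-(x j ^ 2 / 2))))
  rw [integral_congr_ae (ae_of_all _ h_prod), ← h_fubini]
  refine (integral_fintype_prod_eq_prod
    (fun j t => t ^ (2 * kj j) * exp (-(t ^ 2 / 2)))).trans ?_
  simp_rw [integral_pow_two_mul_mul_exp_neg_sq_div_two, Finset.prod_mul_distrib,
    Finset.prod_const, Finset.card_univ, Fintype.card_fin]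
  have h_df : ∏ j, ((2 * kj j - 1)‼ : ℝ) = (2 * k - 1)‼ := by
    rw [Finset.prod_eq_single i (fun j _ hj => by simp [kj, hj]) (by simp)]
    simp [kj]
  rw [h_df, sqrt_eq_rpow, ← rpow_mul_natCast (by positivity)]
  ring_nf

theorem integral_toSphere_coord_pow (i : Fin n) (k : ℕ) :
    ∫ y : sphere (0 : EuclideanSpace ℝ (Fin n)) 1, (y : EuclideanSpace ℝ (Fin n)) i ^ (2 * k)
        ∂(volume : Measure (EuclideanSpace ℝ (Fin n))).toSphere =
      (2 * π) ^ ((n : ℝ) / 2) * (2 * k - 1)‼ *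
        (2 ^ (-((n : ℝ) / 2 + k - 1)) / Gamma ((n : ℝ) / 2 + k)) := by
  have : Nonempty (Fin n) := ⟨i⟩
  have h := integral_mul_exp_neg_norm_sq_div_two_of_homogeneous volume
    (fun x : EuclideanSpace ℝ (Fin n) => x i ^ (2 * k)) (2 * k)
    fun r _ x => by simp only [PiLp.smul_apply, smul_eq_mul, mul_pow]
  rw [integral_euclideanSpace_coord_pow_mul_exp_neg_norm_sq_div_two,
    finrank_euclideanSpace_fin,
    show ((n : ℝ) + (2 * k : ℕ)) / 2 = (n : ℝ) / 2 + k by push_cast; ring] at h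
  have hn : (0 : ℝ) < n := Nat.cast_pos.mpr i.pos
  have hΓ : 0 < Gamma ((n : ℝ) / 2 + k) := Gamma_pos_of_pos (by positivity)
  have h2 : (0 : ℝ) < 2 ^ ((n : ℝ) / 2 + k - 1) := rpow_pos_of_pos two_pos _
  rw [h, rpow_neg zero_le_two]
  field_simp

theorem integral_toSphere_coord_pow_mul_inner (i : Fin n) (k : ℕ)
    (ξ : EuclideanSpace ℝ (Fin n)) :
    ∫ y : sphere (0 : EuclideanSpace ℝ (Fin n)) 1,
        (y : EuclideanSpace ℝ (Fin n)) i ^ (2 * k) * ⟪(y : EuclideanSpace ℝ (Fin n)), ξ⟫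
        ∂(volume : Measure (EuclideanSpace ℝ (Fin n))).toSphere = 0 := by
  have : Nonempty (Fin n) := ⟨i⟩
  refine integral_toSphere_eq_zero_of_odd_of_homogeneous volume
    (fun x : EuclideanSpace ℝ (Fin n) => x i ^ (2 * k) * ⟪x, ξ⟫) (2 * k + 1)
    (fun r _ x => ?_) fun x => ?_
  · simp only [PiLp.smul_apply, smul_eq_mul, mul_pow, real_inner_smul_left]
    ring
  · simp only [PiLp.neg_apply, (even_two_mul k).neg_pow, inner_neg_left, mul_neg]

theorem isBigO_integral_toSphere_coord_pow_mul_cexp_sub (i : Fin n) (k : ℕ) :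
    (fun ξ : EuclideanSpace ℝ (Fin n) =>
      (∫ x : sphere (0 : EuclideanSpace ℝ (Fin n)) 1,
        (((x : EuclideanSpace ℝ (Fin n)) i) ^ (2 * k) : ℂ) *
          Complex.exp (-Complex.I * (⟪(x : EuclideanSpace ℝ (Fin n)), ξ⟫ : ℝ))
        ∂(volume : Measure (EuclideanSpace ℝ (Fin n))).toSphere) -
      ((∫ y : sphere (0 : EuclideanSpace ℝ (Fin n)) 1,
        (y : EuclideanSpace ℝ (Fin n)) i ^ (2 * k)
        ∂(volume : Measure (EuclideanSpace ℝ (Fin n))).toSphere : ℝ) : ℂ))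
      =O[𝓝 0] fun ξ => ‖ξ‖ ^ 2 := by
  refine IsBigO.of_bound ((volume : Measure (EuclideanSpace ℝ (Fin n))).toSphere.real univ) ?_
  filter_upwards [closedBall_mem_nhds (0 : EuclideanSpace ℝ (Fin n)) one_pos] with ξ hξ
  rw [mem_closedBall_zero_iff] at hξ
  have h_coord (x : sphere (0 : EuclideanSpace ℝ (Fin n)) 1) :
      |(x : EuclideanSpace ℝ (Fin n)) i| ≤ 1 :=
    (PiLp.norm_apply_le _ i).trans (norm_eq_of_mem_sphere x).le
  have := norm_integral_mul_cexp_neg_I_sub_integral_le (A := 1) (r := ‖ξ‖)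
    (a := fun x : sphere (0 : EuclideanSpace ℝ (Fin n)) 1 =>
      (x : EuclideanSpace ℝ (Fin n)) i ^ (2 * k))
    (t := fun x => ⟪(x : EuclideanSpace ℝ (Fin n)), ξ⟫) (by fun_prop) (by fun_prop)
    (fun x => by rw [abs_pow]; exact pow_le_one₀ (abs_nonneg _) (h_coord x))
    (fun x => (abs_real_inner_le_norm _ _).trans (by rw [norm_eq_of_mem_sphere x, one_mul]))
    hξ (integral_toSphere_coord_pow_mul_inner i k ξ)
  simpa only [Complex.ofReal_pow, one_mul, norm_pow, norm_norm, mul_comm] using this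

end EuclideanSphere

theorem abs_tsum_mul_pow_sub_le {c : ℕ → ℝ} (hc : Summable fun m => |c m|) {x : ℝ}
    (hx : |x| ≤ 1) : |∑' m, c m * x ^ m - c 0| ≤ (∑' m, |c m|) * |x| := by
  have h_le (m j : ℕ) : ‖c m * x ^ j‖ ≤ |c m| := by
    rw [norm_mul, norm_pow, Real.norm_eq_abs, Real.norm_eq_abs]
    exact mul_le_of_le_one_right (abs_nonneg _) (pow_le_one₀ (abs_nonneg _) hx)
  have hs : Summable fun m => c m * x ^ m := .of_norm_bounded hc fun m => h_le m m
  have hc_tail : Summable fun m => |c (m + 1)| := (summable_nat_add_iff 1).mpr hc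
  have h_tail : Summable fun m => ‖c (m + 1) * x ^ m‖ :=
    hc_tail.of_nonneg_of_le (fun _ => norm_nonneg _) fun m => h_le (m + 1) m
  rw [hs.tsum_eq_zero_add, pow_zero, mul_one, add_sub_cancel_left]
  simp_rw [pow_succ, ← mul_assoc, tsum_mul_right, abs_mul]
  refine mul_le_mul_of_nonneg_right ?_ (abs_nonneg x)
  calc |∑' m, c (m + 1) * x ^ m| ≤ ∑' m, ‖c (m + 1) * x ^ m‖ :=
        norm_tsum_le_tsum_norm h_tail
    _ ≤ ∑' m, |c (m + 1)| := h_tail.tsum_le_tsum (fun m => h_le (m + 1) m) hc_tail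
    _ ≤ ∑' m, |c m| := by linarith [hc.tsum_eq_zero_add, abs_nonneg (c 0)]

theorem Real.Gamma_add_one_le_Gamma_add_natCast_add_one {ν : ℝ} (hν : 0 ≤ ν) (m : ℕ) :
    Gamma (ν + 1) ≤ Gamma (ν + m + 1) := by
  induction m with
  | zero => simp
  | succ m ih =>
    have hΓ := Gamma_pos_of_pos (s := ν + m + 1) (by positivity)
    rw [show ν + ((m + 1 : ℕ) : ℝ) + 1 = ν + m + 1 + 1 by push_cast; ring,
      Gamma_add_one (s := ν + m + 1) (by positivity)]
    nlinarith [m.cast_nonneg (α := ℝ)]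

noncomputable def besselCoeff (ν : ℝ) (m : ℕ) : ℝ := (-1) ^ m / (m ! * Gamma (ν + m + 1))

theorem summable_abs_besselCoeff {ν : ℝ} (hν : 0 ≤ ν) :
    Summable fun m => |besselCoeff ν m| := by
  refine .of_nonneg_of_le (fun _ => abs_nonneg _) (fun m => ?_)
    ((Real.summable_pow_div_factorial 1).div_const (Gamma (ν + 1)))
  have hΓ := Gamma_pos_of_pos (s := ν + m + 1) (by positivity)
  rw [besselCoeff, abs_div, abs_pow, abs_neg, abs_one, one_pow,
    abs_of_pos (by positivity), div_div]
  gcongr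
  exact Gamma_add_one_le_Gamma_add_natCast_add_one hν m

section PsiE

variable {n : ℕ}

theorem PsiE_zero (ν : ℝ) :
    PsiE ν (0 : EuclideanSpace ℝ (Fin n)) = 2 ^ (-ν) * besselCoeff ν 0 := by
  simp [PsiE, besselCoeff, div_eq_mul_inv]

theorem PsiE_eq_tsum (ν : ℝ) {ξ : EuclideanSpace ℝ (Fin n)} (hξ : ξ ≠ 0) :
    PsiE ν ξ = 2 ^ (-ν) * ∑' m, besselCoeff ν m * ((‖ξ‖ / 2) ^ 2) ^ m := by
  have h_pos : 0 < ‖ξ‖ := norm_pos_iff.mpr hξ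
  simp only [PsiE, if_neg hξ, besselJ, besselCoeff, ← pow_mul]
  rw [div_rpow h_pos.le zero_le_two, rpow_neg zero_le_two]
  have := (rpow_pos_of_pos h_pos ν).ne'
  field_simp

theorem isBigO_PsiE_sub_PsiE_zero {ν : ℝ} (hν : 0 ≤ ν) :
    (fun ξ : EuclideanSpace ℝ (Fin n) => PsiE ν ξ - PsiE ν (0 : EuclideanSpace ℝ (Fin n)))
      =O[𝓝 0] fun ξ => ‖ξ‖ ^ 2 := by
  refine IsBigO.of_bound (2 ^ (-ν) * (∑' m, |besselCoeff ν m|) / 4) ?_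
  filter_upwards [closedBall_mem_nhds (0 : EuclideanSpace ℝ (Fin n)) two_pos] with ξ hξ
  rw [mem_closedBall_zero_iff] at hξ
  rcases eq_or_ne ξ 0 with rfl | hξ0
  · simp
  have h_arg : |(‖ξ‖ / 2) ^ 2| ≤ 1 := by
    rw [abs_pow, abs_div, abs_norm, abs_two]
    exact pow_le_one₀ (by positivity) ((div_le_one two_pos).mpr hξ)
  rw [PsiE_eq_tsum ν hξ0, PsiE_zero, ← mul_sub, Real.norm_eq_abs, abs_mul,
    abs_of_pos (rpow_pos_of_pos two_pos _), norm_pow, norm_norm]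
  calc 2 ^ (-ν) * |∑' m, besselCoeff ν m * ((‖ξ‖ / 2) ^ 2) ^ m - besselCoeff ν 0|
      ≤ 2 ^ (-ν) * ((∑' m, |besselCoeff ν m|) * |(‖ξ‖ / 2) ^ 2|) := by
        gcongr
        exact abs_tsum_mul_pow_sub_le (summable_abs_besselCoeff hν) h_arg
    _ = 2 ^ (-ν) * (∑' m, |besselCoeff ν m|) / 4 * ‖ξ‖ ^ 2 := by
        rw [abs_of_nonneg (by positivity)]
        ring

end PsiE

theorem fourier_transform_even_monomial_sphere (n : ℕ) (hn : 3 ≤ n) (i1 : Fin n)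
    (k : ℕ) :
    (fun ξ : EuclideanSpace ℝ (Fin n) =>
      (∫ x : Metric.sphere (0 : EuclideanSpace ℝ (Fin n)) 1,
        (((x : EuclideanSpace ℝ (Fin n)) i1) ^ (2 * k) : ℂ) *
          Complex.exp (-Complex.I * (⟪(x : EuclideanSpace ℝ (Fin n)), ξ⟫ : ℝ))
        ∂((volume : Measure (EuclideanSpace ℝ (Fin n))).toSphere)) -
      (((2 * π) ^ ((n : ℝ) / 2) * (Nat.doubleFactorial (2 * k - 1) : ℝ) *
        PsiE ((n : ℝ) / 2 + k - 1) ξ : ℝ) : ℂ))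
      =o[nhds 0] (fun ξ : EuclideanSpace ℝ (Fin n) => ‖ξ‖) ∧
    Tendsto (fun ξ : EuclideanSpace ℝ (Fin n) =>
      ∫ x : Metric.sphere (0 : EuclideanSpace ℝ (Fin n)) 1,
        (((x : EuclideanSpace ℝ (Fin n)) i1) ^ (2 * k) : ℂ) *
          Complex.exp (-Complex.I * (⟪(x : EuclideanSpace ℝ (Fin n)), ξ⟫ : ℝ))
        ∂((volume : Measure (EuclideanSpace ℝ (Fin n))).toSphere))
      (nhds 0)
      (nhds (((2 * π) ^ ((n : ℝ) / 2) * (Nat.doubleFactorial (2 * k - 1) : ℝ) *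
        ((2 : ℝ) ^ (-((n : ℝ) / 2 + k - 1)) / Real.Gamma ((n : ℝ) / 2 + k)) : ℝ) : ℂ)) := by
  have hν : 0 ≤ (n : ℝ) / 2 + k - 1 := by
    have : (3 : ℝ) ≤ n := by exact_mod_cast hn
    linarith [k.cast_nonneg (α := ℝ)]
  have h_psi_zero : PsiE ((n : ℝ) / 2 + k - 1) (0 : EuclideanSpace ℝ (Fin n)) =
      2 ^ (-((n : ℝ) / 2 + k - 1)) / Gamma ((n : ℝ) / 2 + k) := by
    rw [PsiE, if_pos rfl, sub_add_cancel]
  have h_fourier := isBigO_integral_toSphere_coord_pow_mul_cexp_sub i1 k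
  rw [integral_toSphere_coord_pow, ← h_psi_zero] at h_fourier
  have h_psi := Complex.isBigO_ofReal_left.mpr <|
    (isBigO_PsiE_sub_PsiE_zero (n := n) hν).const_mul_left ((2 * π) ^ ((n : ℝ) / 2) * (2 * k - 1)‼)
  refine ⟨((h_fourier.sub h_psi).congr_left fun ξ => by push_cast; ring).trans_isLittleO
    (isLittleO_norm_pow_id one_lt_two).norm_right, ?_⟩
  have h_sq : Tendsto (fun ξ : EuclideanSpace ℝ (Fin n) => ‖ξ‖ ^ 2) (𝓝 0) (𝓝 0) := by
    simpa using tendsto_norm_zero.pow 2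
  rw [← h_psi_zero]
  exact tendsto_sub_nhds_zero_iff.mp (h_fourier.trans_tendsto h_sq)
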